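/- For the dilated discrete Fourier transform F_{N,α} with dilation α ∈ [1,M], one has the operator norm bound ‖F_{N,α}‖ ≤ C √(log N) for some absolute constant C. -/

import Mathlib

/-!
Schur's test for the Gram matrix `G = F*F` gives `‖F‖² = ‖G‖ ≤ max_k ∑_l |G k l|`. The entry
`G k l` is the normalised geometric sum `N⁻¹ ∑_{j<N} e^{2πi t j}` with `t = α (k - l) / N`, so
`|G k l| ≤ min (1, 1 / (2 N |t - m|))` where `m` is the integer nearest to `t`. Since `|t| < α`,
only `2 ⌈α⌉ + 1` values of `m` occur, and for each of them `2 N |t - m| ≥ |l - (k - m N / α)|`;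
summing over `l` then costs a harmonic sum `O(log N)` per value of `m`.
-/

/-- The dilated discrete Fourier transform matrix
`(F_{N,α})_{jℓ} = N^{-1/2} exp(-2πi α jℓ/N)`. -/
noncomputable def dftDilMat (N : ℕ) (α : ℝ) : Matrix (Fin N) (Fin N) ℂ :=
  Matrix.of fun j ℓ => ((N : ℂ) ^ (-(1/2 : ℂ))) *
    Complex.exp (-2 * Real.pi * Complex.I * (α : ℂ) * ((j : ℕ) : ℂ) * ((ℓ : ℕ) : ℂ) / (N : ℂ))

open Finset Complex Matrix
open scoped Real

theorem Finset.sum_le_sum_of_injOn {ι κ M : Type*} [AddCommMonoid M] [PartialOrder M]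
    [IsOrderedAddMonoid M] {s : Finset ι} {t : Finset κ} {f : ι → M} {g : κ → M} (e : ι → κ)
    (he : Set.InjOn e s) (hst : ∀ i ∈ s, e i ∈ t) (hfg : ∀ i ∈ s, f i ≤ g (e i))
    (hg : ∀ k ∈ t, 0 ≤ g k) :
    ∑ i ∈ s, f i ≤ ∑ k ∈ t, g k := by
  classical
  calc ∑ i ∈ s, f i ≤ ∑ i ∈ s, g (e i) := sum_le_sum hfg
    _ = ∑ k ∈ s.image e, g k := (sum_image he).symm
    _ ≤ ∑ k ∈ t, g k :=
      sum_le_sum_of_subset_of_nonneg (image_subset_iff.mpr hst) fun k hk _ => hg k hk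

theorem inv_max_one_le_inv_max_one {a b : ℝ} (h : a ≤ b) : (max 1 b)⁻¹ ≤ (max 1 a)⁻¹ :=
  inv_anti₀ (by positivity) (max_le_max le_rfl h)

theorem sum_range_inv_max_one_le (N : ℕ) :
    ∑ k ∈ range N, (max 1 (k : ℝ))⁻¹ ≤ 2 + Real.log N := by
  rcases N with _ | N
  · simp
  have hharmonic : ∑ k ∈ range (N + 1), (max 1 (k : ℝ))⁻¹ = 1 + harmonic N := by
    simp [sum_range_succ', harmonic, add_comm]
  have hlog : Real.log N ≤ Real.log (N + 1 : ℕ) := by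
    rcases N.eq_zero_or_pos with rfl | hN
    · simp
    · exact Real.log_le_log (by positivity) (by push_cast; linarith)
  linarith [harmonic_le_one_add_log N]

theorem sum_range_inv_max_one_abs_sub_le (N : ℕ) (y : ℝ) :
    ∑ i ∈ range N, (max 1 |(i : ℝ) - y|)⁻¹ ≤ 2 * (2 + Real.log N) := by
  have hnonneg : ∀ k ∈ range N, (0 : ℝ) ≤ (max 1 (k : ℝ))⁻¹ := fun k _ => by positivity
  -- On each side of `y`, the distances to `y` dominate distinct naturals below `N`.
  have hright : ∑ i ∈ range N with y ≤ ((i : ℕ) : ℝ), (max 1 |(i : ℝ) - y|)⁻¹ ≤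
      2 + Real.log N := by
    refine (sum_le_sum_of_injOn (fun i => i - ⌈y⌉₊) ?_ ?_ ?_ hnonneg).trans
      (sum_range_inv_max_one_le N) <;> simp only [coe_filter, mem_filter, mem_range]
    · intro i ⟨_, hi⟩ j ⟨_, hj⟩ hij
      have := Nat.ceil_le.mpr hi
      have := Nat.ceil_le.mpr hj
      simp only at hij
      omega
    · intro i hi
      omega
    · intro i ⟨_, hi⟩
      refine inv_max_one_le_inv_max_one ?_
      rw [Nat.cast_sub (Nat.ceil_le.mpr hi)]
      linarith [Nat.le_ceil y, le_abs_self ((i : ℝ) - y)]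
  have hleft : ∑ i ∈ range N with ¬ y ≤ ((i : ℕ) : ℝ), (max 1 |(i : ℝ) - y|)⁻¹ ≤
      2 + Real.log N := by
    refine (sum_le_sum_of_injOn (fun i => min ⌊y⌋₊ (N - 1) - i) ?_ ?_ ?_ hnonneg).trans
      (sum_range_inv_max_one_le N) <;> simp only [coe_filter, mem_filter, mem_range]
    · intro i ⟨_, hi⟩ j ⟨_, hj⟩ hij
      have := Nat.le_floor (lt_of_not_ge hi).le
      have := Nat.le_floor (lt_of_not_ge hj).le
      simp only at hij
      omega
    · intro i hi
      omega
    · intro i ⟨_, hi⟩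
      have hiy := (lt_of_not_ge hi).le
      refine inv_max_one_le_inv_max_one ?_
      have hle : min ⌊y⌋₊ (N - 1) - i ≤ ⌊y⌋₊ - i := by omega
      calc ((min ⌊y⌋₊ (N - 1) - i : ℕ) : ℝ) ≤ ((⌊y⌋₊ - i : ℕ) : ℝ) := by exact_mod_cast hle
        _ = ⌊y⌋₊ - i := Nat.cast_sub (Nat.le_floor hiy)
        _ ≤ |(i : ℝ) - y| := by
          rw [abs_sub_comm]
          linarith [Nat.floor_le ((Nat.cast_nonneg i).trans hiy), le_abs_self (y - i)]
  rw [← sum_filter_add_sum_filter_not _ (fun i : ℕ => y ≤ i)]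
  linarith

theorem two_mul_abs_sub_round_le_abs_sin (t : ℝ) :
    2 * |t - round t| ≤ |Real.sin (π * t)| := by
  have hperiodic : |Real.sin (π * t)| = |Real.sin (π * (t - round t))| := by
    rw [← one_mul |Real.sin (π * (t - round t))|, ← abs_neg_one_zpow (round t),
      ← abs_mul, ← Real.sin_add_int_mul_pi]
    ring_nf
  have hsmall : |π * (t - round t)| ≤ π / 2 := by
    rw [abs_mul, abs_of_pos Real.pi_pos]
    nlinarith [abs_sub_round t, Real.pi_pos]
  have := Real.mul_abs_le_abs_sin hsmall
  rw [abs_mul, abs_of_pos Real.pi_pos] at this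
  rw [hperiodic]
  convert this using 1
  field_simp

theorem abs_sin_mul_norm_geom_sum_exp_le (θ : ℝ) (n : ℕ) :
    |Real.sin (θ / 2)| * ‖∑ j ∈ range n, exp (I * θ) ^ j‖ ≤ 1 := by
  set w := exp (I * θ)
  have hw : ‖w‖ = 1 := norm_exp_I_mul_ofReal θ
  have hw1 : ‖w - 1‖ = 2 * |Real.sin (θ / 2)| := by
    simp [w, norm_exp_I_mul_ofReal_sub_one]
  have : ‖w ^ n - 1‖ ≤ 2 := by
    calc ‖w ^ n - 1‖ ≤ ‖w ^ n‖ + ‖(1 : ℂ)‖ := norm_sub_le _ _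
      _ = 2 := by simp [hw]; norm_num
  rw [← geom_sum_mul, norm_mul, hw1] at this
  linarith

namespace Matrix

open scoped Matrix.Norms.L2Operator

variable {𝕜 m n : Type*} [RCLike 𝕜] [Fintype m] [Fintype n] [DecidableEq n]

theorem l2_opNorm_le_sqrt_of_sum_norm_le (B : Matrix m n 𝕜) {R C : ℝ} (hR₀ : 0 ≤ R)
    (hC₀ : 0 ≤ C) (hR : ∀ i, ∑ j, ‖B i j‖ ≤ R) (hC : ∀ j, ∑ i, ‖B i j‖ ≤ C) :
    ‖B‖ ≤ √(R * C) := by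
  refine ContinuousLinearMap.opNorm_le_bound _ (by positivity) fun x => ?_
  refine (sq_le_sq₀ (norm_nonneg _) (by positivity)).mp ?_
  have hrow : ∀ i, ‖(B *ᵥ x) i‖ ^ 2 ≤ R * ∑ j, ‖B i j‖ * ‖x j‖ ^ 2 := fun i => by
    calc ‖(B *ᵥ x) i‖ ^ 2 ≤ (∑ j, ‖B i j‖ * ‖x j‖) ^ 2 := by
          gcongr
          exact (norm_sum_le _ _).trans_eq (by simp_rw [norm_mul])
      _ ≤ (∑ j, ‖B i j‖) * ∑ j, ‖B i j‖ * ‖x j‖ ^ 2 :=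
          sum_sq_le_sum_mul_sum_of_sq_le_mul _ (fun _ _ => norm_nonneg _)
            (fun _ _ => by positivity) fun j _ => le_of_eq (by ring)
      _ ≤ R * ∑ j, ‖B i j‖ * ‖x j‖ ^ 2 := by gcongr; exact hR i
  calc ‖toEuclideanLin B x‖ ^ 2 = ∑ i, ‖(B *ᵥ x) i‖ ^ 2 := EuclideanSpace.norm_sq_eq _
    _ ≤ ∑ i, R * ∑ j, ‖B i j‖ * ‖x j‖ ^ 2 := sum_le_sum fun i _ => hrow i
    _ = R * ∑ j, (∑ i, ‖B i j‖) * ‖x j‖ ^ 2 := by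
      rw [← mul_sum, sum_comm]
      simp_rw [sum_mul]
    _ ≤ R * ∑ j, C * ‖x j‖ ^ 2 := by gcongr with j; exact hC j
    _ = (√(R * C) * ‖x‖) ^ 2 := by
      rw [← mul_sum, ← EuclideanSpace.norm_sq_eq, mul_pow, Real.sq_sqrt (by positivity)]
      ring

theorem sq_l2_opNorm_le_of_sum_norm_gram_le (A : Matrix m n 𝕜) {K : ℝ} (hK₀ : 0 ≤ K)
    (hK : ∀ j, ∑ k, ‖(Aᴴ * A) j k‖ ≤ K) : ‖A‖ ^ 2 ≤ K := by
  have hcol : ∀ k, ∑ j, ‖(Aᴴ * A) j k‖ ≤ K := fun k => by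
    simpa only [← (isHermitian_conjTranspose_mul_self A).apply k, norm_star] using hK k
  rw [sq, ← l2_opNorm_conjTranspose_mul_self, ← Real.sqrt_mul_self hK₀]
  exact l2_opNorm_le_sqrt_of_sum_norm_le _ hK₀ hK₀ hK hcol

end Matrix

theorem star_natCast_cpow_neg_half_mul_self (N : ℕ) :
    star ((N : ℂ) ^ (-(1 / 2 : ℂ))) * (N : ℂ) ^ (-(1 / 2 : ℂ)) = (N : ℂ)⁻¹ := by
  have h : (N : ℂ) ^ (-(1 / 2 : ℂ)) = (((N : ℝ) ^ (-(1 / 2 : ℝ)) : ℝ) : ℂ) := by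
    rw [ofReal_cpow (Nat.cast_nonneg N)]
    push_cast
    rfl
  rw [h, star_def, conj_ofReal, ← ofReal_mul, ← Real.rpow_add' (Nat.cast_nonneg N) (by norm_num)]
  norm_num [Real.rpow_neg_one]

theorem dftDilMat_gram_apply (N : ℕ) (α : ℝ) (k l : Fin N) :
    ((dftDilMat N α)ᴴ * dftDilMat N α) k l =
      (N : ℂ)⁻¹ * ∑ j ∈ range N, exp (I * (2 * π * α * ((k : ℝ) - l) / N : ℝ)) ^ j := by
  simp only [mul_apply, conjTranspose_apply, dftDilMat, of_apply, star_mul', mul_mul_mul_comm,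
    star_natCast_cpow_neg_half_mul_self, ← mul_sum]
  congr 1
  rw [← Fin.sum_univ_eq_sum_range]
  refine sum_congr rfl fun j _ => ?_
  rw [← exp_nat_mul, star_def, ← exp_conj, ← exp_add]
  congr 1
  simp only [map_mul, map_div₀, map_neg, map_ofNat, conj_ofReal, conj_I, map_natCast]
  push_cast
  ring

theorem norm_dftDilMat_gram_apply_le (N : ℕ) (α : ℝ) (k l : Fin N) :
    ‖((dftDilMat N α)ᴴ * dftDilMat N α) k l‖ ≤
      (max 1 (2 * |α * ((k : ℝ) - l) - round (α * ((k : ℝ) - l) / N) * N|))⁻¹ := by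
  have hN : (0 : ℝ) < N := by exact_mod_cast k.pos
  set t := α * ((k : ℝ) - l) / N
  set S := ∑ j ∈ range N, exp (I * (2 * π * α * ((k : ℝ) - l) / N : ℝ)) ^ j
  have hentry : ‖((dftDilMat N α)ᴴ * dftDilMat N α) k l‖ = ‖S‖ / N := by
    rw [dftDilMat_gram_apply, norm_mul, norm_inv, norm_natCast, inv_mul_eq_div]
  have hS_le : ‖S‖ ≤ N :=
    (norm_sum_le _ _).trans_eq (by
      simp only [norm_pow, norm_exp_I_mul_ofReal, one_pow, sum_const, card_range, nsmul_one])
  have hsin_S : |Real.sin (π * t)| * ‖S‖ ≤ 1 := by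
    have := abs_sin_mul_norm_geom_sum_exp_le (2 * π * α * ((k : ℝ) - l) / N) N
    rwa [show 2 * π * α * ((k : ℝ) - l) / N / 2 = π * t by ring] at this
  have hdist : α * ((k : ℝ) - l) - round t * N = N * (t - round t) := by
    rw [mul_sub (N : ℝ), mul_div_cancel₀ _ hN.ne']
    ring
  rw [hentry, hdist, abs_mul, abs_of_pos hN, ← one_div, le_div_iff₀ (by positivity),
    mul_max_of_nonneg _ _ (by positivity)]
  refine max_le (by rw [mul_one, div_le_one hN]; exact hS_le) ?_
  calc ‖S‖ / N * (2 * (N * |t - round t|)) = 2 * |t - round t| * ‖S‖ := by field_simp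
    _ ≤ |Real.sin (π * t)| * ‖S‖ := by gcongr; exact two_mul_abs_sub_round_le_abs_sin t
    _ ≤ 1 := hsin_S

theorem sum_norm_dftDilMat_gram_le (N : ℕ) {α : ℝ} (hα : 1 / 2 ≤ α) (k : Fin N) :
    ∑ l, ‖((dftDilMat N α)ᴴ * dftDilMat N α) k l‖ ≤
      (2 * ⌈α⌉₊ + 1) * (2 * (2 + Real.log N)) := by
  have hN : (0 : ℝ) < N := by exact_mod_cast k.pos
  have hα₀ : 0 < α := by linarith
  set y : ℤ → ℝ := fun m => (k : ℝ) - m * N / α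
  have hentry : ∀ l : Fin N, ‖((dftDilMat N α)ᴴ * dftDilMat N α) k l‖ ≤
      ∑ m ∈ Icc (-⌈α⌉₊ : ℤ) ⌈α⌉₊, (max 1 |(l : ℝ) - y m|)⁻¹ := fun l => by
    set t := α * ((k : ℝ) - l) / N
    have ht : |t| < α := by
      have hkl : |(k : ℝ) - l| < N := by
        have hk : (k : ℝ) < N := by exact_mod_cast k.isLt
        have hl : (l : ℝ) < N := by exact_mod_cast l.isLt
        rw [abs_sub_lt_iff]
        constructor <;> linarith [Nat.cast_nonneg (α := ℝ) k, Nat.cast_nonneg (α := ℝ) l]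
      rw [abs_div, abs_mul, abs_of_pos hα₀, abs_of_pos hN, div_lt_iff₀ hN]
      exact mul_lt_mul_of_pos_left hkl hα₀
    have hmem : round t ∈ Icc (-⌈α⌉₊ : ℤ) ⌈α⌉₊ := by
      have : |(round t : ℝ)| < ⌈α⌉₊ + 1 := by
        linarith [abs_sub_round t, abs_sub_abs_le_abs_sub (round t : ℝ) t,
          abs_sub_comm t (round t), Nat.le_ceil α]
      have : |round t| < ⌈α⌉₊ + 1 := by exact_mod_cast this
      rw [mem_Icc]
      constructor <;> linarith [abs_lt.mp this]
    refine (norm_dftDilMat_gram_apply_le N α k l).trans <|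
      (inv_max_one_le_inv_max_one ?_).trans <|
        single_le_sum (f := fun m => (max 1 |(l : ℝ) - y m|)⁻¹) (fun _ _ => by positivity) hmem
    have hy : (l : ℝ) - y (round t) = -(α * ((k : ℝ) - l) - round t * N) / α := by
      simp only [y]
      field_simp
      ring
    rw [hy, abs_div, abs_neg, abs_of_pos hα₀, div_le_iff₀ hα₀]
    nlinarith [abs_nonneg (α * ((k : ℝ) - l) - round t * N)]
  calc ∑ l, ‖((dftDilMat N α)ᴴ * dftDilMat N α) k l‖
      ≤ ∑ l : Fin N, ∑ m ∈ Icc (-⌈α⌉₊ : ℤ) ⌈α⌉₊, (max 1 |(l : ℝ) - y m|)⁻¹ :=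
        sum_le_sum fun l _ => hentry l
    _ = ∑ m ∈ Icc (-⌈α⌉₊ : ℤ) ⌈α⌉₊, ∑ i ∈ range N, (max 1 |(i : ℝ) - y m|)⁻¹ := by
        rw [sum_comm]
        exact sum_congr rfl fun m _ =>
          Fin.sum_univ_eq_sum_range (fun i => (max 1 |(i : ℝ) - y m|)⁻¹) N
    _ ≤ ∑ m ∈ Icc (-⌈α⌉₊ : ℤ) ⌈α⌉₊, 2 * (2 + Real.log N) :=
        sum_le_sum fun m _ => sum_range_inv_max_one_abs_sub_le N (y m)
    _ = (2 * ⌈α⌉₊ + 1) * (2 * (2 + Real.log N)) := by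
        have : ((⌈α⌉₊ : ℤ) + 1 - -⌈α⌉₊).toNat = 2 * ⌈α⌉₊ + 1 := by omega
        rw [sum_const, Int.card_Icc, nsmul_eq_mul, this]
        push_cast
        ring

theorem stmt13_general (M : ℝ) :
    ∃ C : ℝ, 0 < C ∧ ∀ N : ℕ, 2 ≤ N → ∀ α : ℝ, 1 ≤ α → α ≤ M →
      ‖LinearMap.toContinuousLinearMap (Matrix.toEuclideanLin (dftDilMat N α))‖ ≤
        C * Real.sqrt (Real.log N) := by
  refine ⟨√(8 * (2 * ⌈M⌉₊ + 1)), by positivity, fun N hN α hα hαM => ?_⟩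
  have hlogN : 2 / 3 < Real.log N :=
    (Real.log_two_gt_d9.trans_le' (by norm_num)).trans_le
      (Real.log_le_log (by norm_num) (by exact_mod_cast hN))
  have hceil : (⌈α⌉₊ : ℝ) ≤ ⌈M⌉₊ := by exact_mod_cast Nat.ceil_mono hαM
  have hrow : ∀ k, ∑ l, ‖((dftDilMat N α)ᴴ * dftDilMat N α) k l‖ ≤
      8 * (2 * ⌈M⌉₊ + 1) * Real.log N := fun k =>
    (sum_norm_dftDilMat_gram_le N (by linarith) k).trans (by nlinarith)
  have hsq : ‖LinearMap.toContinuousLinearMap (Matrix.toEuclideanLin (dftDilMat N α))‖ ^ 2 ≤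
      8 * (2 * ⌈M⌉₊ + 1) * Real.log N :=
    Matrix.sq_l2_opNorm_le_of_sum_norm_gram_le _ (by positivity) hrow
  rw [← Real.sqrt_mul (by positivity)]
  exact (Real.le_sqrt (norm_nonneg _) (by positivity)).mpr hsq

/-- For the dilated discrete Fourier transform with `α ∈ [1, M]` one has the operator
norm bound `‖F_{N,α}‖ ≤ C √(log N)`. -/
theorem stmt13 (M : ℝ) (hM : 1 ≤ M) :
    ∃ C : ℝ, 0 < C ∧ ∀ N : ℕ, 2 ≤ N → ∀ α : ℝ, 1 ≤ α → α ≤ M →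
      ‖LinearMap.toContinuousLinearMap (Matrix.toEuclideanLin (dftDilMat N α))‖ ≤
        C * Real.sqrt (Real.log N) :=
  stmt13_general M
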